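/- arXiv:2112.04670 — 2 statements merged into one kernel-verified Lean document; each statement's English description precedes it below -/
import Mathlib

section
/- For every ordinal β < α and every y ∈ X^{β+1}, the support of y (with respect to the biorthogonal system {z_i*}) does not properly contain the support of any vector z ∈ ⋃_{0≤γ≤β} X^γ. -/
open Set Filter Topology

noncomputable section

namespace Paper

/-- `y` is an up-neighbor of `x` within the subforest `S`: both belong to `S`, `x < y`,
and no vertex of `S` lies strictly between them. -/
def UpNbrIn {P : Type*} [PartialOrder P] (S : Set P) (x y : P) : Prop :=
  x ∈ S ∧ y ∈ S ∧ x < y ∧ ∀ z ∈ S, ¬(x < z ∧ z < y)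

/-- `x` is a terminal vertex of the subforest `S`: it has no up-neighbors within `S`. -/
def TerminalIn {P : Type*} [PartialOrder P] (S : Set P) (x : P) : Prop :=
  x ∈ S ∧ ∀ y, ¬UpNbrIn S x y

/-- One step of the derived forest operation: delete every terminal vertex whose
down-neighbor has infinitely many terminal up-neighbors. -/
def derStep {P : Type*} [PartialOrder P] (S : Set P) : Set P :=
  S \ {x | TerminalIn S x ∧ ∃ u, UpNbrIn S u x ∧ {y | UpNbrIn S u y ∧ TerminalIn S y}.Infinite}

/-- Transfinite iteration of the derived forest operation: `derIter S β = S^{(β)}`,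
with intersections at limit stages. -/
def derIter {P : Type*} [PartialOrder P] (S : Set P) (β : Ordinal) : Set P :=
  Ordinal.limitRecOn β S (fun _ T => derStep T)
    (fun β _ ih => ⋂ (γ : Ordinal), ⋂ (h : γ < β), ih γ h)

/-- Weak* closure of a set in the dual of a real normed space. -/
def wcl {Z : Type*} [NormedAddCommGroup Z] [NormedSpace ℝ Z]
    (A : Set (StrongDual ℝ Z)) : Set (StrongDual ℝ Z) :=
  StrongDual.toWeakDual ⁻¹' closure (StrongDual.toWeakDual '' A)

/-- The weak* derived set `A^{(1)} = ⋃ₙ weak*-closure (A ∩ n B_{Z*})`. -/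
def derSet {Z : Type*} [NormedAddCommGroup Z] [NormedSpace ℝ Z]
    (A : Set (StrongDual ℝ Z)) : Set (StrongDual ℝ Z) :=
  ⋃ n : ℕ, wcl (A ∩ {f | ‖f‖ ≤ (n : ℝ)})

/-- Transfinite weak* derived sets: `A^{(0)} = A`, `A^{(β+1)} = (A^{(β)})^{(1)}`, and
`A^{(β)} = ⋃_{γ<β} A^{(γ)}` at limit stages. -/
def derSetIter {Z : Type*} [NormedAddCommGroup Z] [NormedSpace ℝ Z]
    (A : Set (StrongDual ℝ Z)) (α : Ordinal) : Set (StrongDual ℝ Z) :=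
  Ordinal.limitRecOn α A (fun _ T => derSet T)
    (fun α _ ih => ⋃ (β : Ordinal), ⋃ (h : β < α), ih β h)

/-- The coefficient attached to a vertex `u` of the forest: the label of its down-neighbor,
or the label of `u` itself when `u` is an initial vertex (`n₀ = n₁`). -/
def coefN {P : Type*} [PartialOrder P] (e : P → ℕ) (u : P) : ℕ :=
  letI := Classical.dec (∃ w, w ⋖ u)
  if h : ∃ w, w ⋖ u then e h.choose else e u

/-- The vector `z*(v)` shortened to the subforest `S`:
`∑_{u ≤ v, u ∈ S} n_{i-1} z*_{n_i}`. -/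
def shortVec {P : Type*} [PartialOrder P] {Z : Type*} [NormedAddCommGroup Z] [NormedSpace ℝ Z]
    (e : P → ℕ) (zs : ℕ → StrongDual ℝ Z) (S : Set P) (v : P) : StrongDual ℝ Z :=
  ∑ᶠ u ∈ ({w | w ≤ v} ∩ S), (coefN e u : ℝ) • zs (e u)

/-- The shortening `X^β` of the set `X_α` to the subforest `S` (for `S = (F_α)^β`);
for `S = univ` this is `X_α` itself. -/
def XsetOf {P : Type*} [PartialOrder P] {Z : Type*} [NormedAddCommGroup Z] [NormedSpace ℝ Z]
    (e : P → ℕ) (zs : ℕ → StrongDual ℝ Z) (S : Set P) : Set (StrongDual ℝ Z) :=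
  {x | ∃ v : P, (¬∃ y, v ⋖ y) ∧ x = shortVec e zs S v}

/-- The largest index in the support of a vector of `X^β` (read off by evaluating
against the basic sequence); it is the label of the vertex `v(x)`. -/
def topIdx {Z : Type*} [NormedAddCommGroup Z] [NormedSpace ℝ Z]
    (z : ℕ → Z) (x : StrongDual ℝ Z) : ℕ :=
  sSup {n | x (z n) ≠ 0}

/-- The vector `y(x)`: `x` with the coordinate at its top vertex `v(x)` replaced by `0`. -/
def truncTop {Z : Type*} [NormedAddCommGroup Z] [NormedSpace ℝ Z]
    (z : ℕ → Z) (zs : ℕ → StrongDual ℝ Z) (x : StrongDual ℝ Z) :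
    StrongDual ℝ Z :=
  x - x (z (topIdx z x)) • zs (topIdx z x)

/-!
Call the height of a vertex `u` the first derivation stage at which all vertices strictly above
`u` have been deleted. Every up-set of `F_α` is a copy of some `F_ζ` with `ζ` zero or a
successor, and such a copy rooted at `u` gives `u` height `ζ`, by induction on `ζ`: for
`ζ = ξ + 1` the covers of `u` have heights `ords n ≤ ξ` accumulating only at `ξ`, so they all
survive up to stage `ξ`, where they are all terminal, and are deleted together at stage `ξ + 1`.

If the support of `z*(w)` shortened to `(F_α)^γ` were a proper subset of that of `z*(v)`
shortened to `(F_α)^{β+1}`, the branches below `w` and `v` would split at a vertex `u` with a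
cover `c ∉ (F_α)^γ` towards `w` and a cover `t ∈ (F_α)^{β+1}` towards `v`. The cover `t` shows
that `u` has height greater than `β + 1`, so every cover of `u`, `c` included, survives up to
stage `β ≥ γ`.
-/

theorem eq_zero_or_exists_eq_add_one {ζ : Ordinal} (hζ : ¬Order.IsSuccLimit ζ) :
    ζ = 0 ∨ ∃ δ, ζ = δ + 1 := by
  rcases Ordinal.zero_or_succ_or_isSuccLimit ζ with h | ⟨δ, h⟩ | h
  · exact Or.inl h
  · exact Or.inr ⟨δ, h.symm.trans (Order.succ_eq_add_one δ)⟩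
  · exact absurd h hζ

section Derivation

variable {W : Type*} [PartialOrder W]

theorem derIter_zero (S : Set W) : derIter S 0 = S :=
  Ordinal.limitRecOn_zero _ _ _

theorem derIter_succ (S : Set W) (δ : Ordinal) :
    derIter S (δ + 1) = derStep (derIter S δ) := by
  rw [derIter, Ordinal.limitRecOn_add_one]
  rfl

theorem derIter_limit (S : Set W) {δ : Ordinal} (hδ : Order.IsSuccLimit δ) :
    derIter S δ = ⋂ γ < δ, derIter S γ := by
  rw [derIter, Ordinal.limitRecOn_limit _ _ _ _ hδ]
  rfl

theorem derIter_antitone (S : Set W) : Antitone (derIter S) := by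
  intro σ δ h
  induction δ using Ordinal.limitRecOn with
  | zero => rw [nonpos_iff_eq_zero.mp h]
  | add_one δ ih =>
    rcases h.lt_or_eq with h | rfl
    · rw [derIter_succ]
      exact sdiff_subset.trans (ih (Order.lt_add_one_iff.mp h))
    · rfl
  | limit δ hδ ih =>
    rcases h.lt_or_eq with h | rfl
    · rw [derIter_limit S hδ]
      exact biInter_subset_of_mem (t := fun γ => derIter S γ) h
    · rfl

theorem exists_mem_derIter_not_mem_succ {S : Set W} {x : W} (hx : x ∈ S) {δ : Ordinal}
    (hxδ : x ∉ derIter S δ) :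
    ∃ σ, σ + 1 ≤ δ ∧ x ∈ derIter S σ ∧ x ∉ derIter S (σ + 1) := by
  induction δ using Ordinal.limitRecOn with
  | zero => exact absurd (by rwa [derIter_zero]) hxδ
  | add_one δ ih =>
    by_cases h : x ∈ derIter S δ
    · exact ⟨δ, le_rfl, h, hxδ⟩
    · obtain ⟨σ, hσ, h⟩ := ih h
      exact ⟨σ, hσ.trans le_self_add, h⟩
  | limit δ hδ ih =>
    rw [derIter_limit S hδ] at hxδ
    simp only [mem_iInter, not_forall] at hxδ
    obtain ⟨γ, hγ, h⟩ := hxδ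
    obtain ⟨σ, hσ, h⟩ := ih γ hγ h
    exact ⟨σ, hσ.trans hγ.le, h⟩

theorem mem_derIter_of_isMin {r : W} (hr : IsMin r) (δ : Ordinal) : r ∈ derIter univ δ := by
  induction δ using Ordinal.limitRecOn with
  | zero => rw [derIter_zero]; exact mem_univ r
  | add_one δ ih =>
    rw [derIter_succ]
    exact ⟨ih, fun ⟨_, u, hu, _⟩ => hu.2.2.1.not_isMin hr⟩
  | limit δ hδ ih =>
    rw [derIter_limit _ hδ]
    exact mem_iInter₂.mpr ih

theorem upNbrIn_iff {S : Set W} (hS : IsLowerSet S) {x y : W} :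
    UpNbrIn S x y ↔ x ⋖ y ∧ y ∈ S :=
  ⟨fun h => ⟨⟨h.2.2.1, fun z hxz hzy => h.2.2.2 z (hS hzy.le h.2.1) ⟨hxz, hzy⟩⟩, h.2.1⟩,
    fun h => ⟨hS h.1.le h.2, h.2, h.1.lt, fun _ _ hz => h.1.2 hz.1 hz.2⟩⟩

theorem terminalIn_iff [IsStronglyAtomic W] {S : Set W} (hS : IsLowerSet S) {x : W} :
    TerminalIn S x ↔ x ∈ S ∧ Disjoint (Ioi x) S := by
  refine and_congr_right fun _ => ⟨fun h => disjoint_left.2 fun y hxy hy => ?_, fun h y hy => ?_⟩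
  · obtain ⟨c, hxc, hcy⟩ := exists_covBy_le_of_lt hxy
    exact h c ((upNbrIn_iff hS).2 ⟨hxc, hS hcy hy⟩)
  · exact disjoint_left.1 h ((upNbrIn_iff hS).1 hy).1.lt ((upNbrIn_iff hS).1 hy).2

theorem isLowerSet_derIter [IsStronglyAtomic W] (δ : Ordinal) :
    IsLowerSet (derIter (univ : Set W) δ) := by
  induction δ using Ordinal.limitRecOn with
  | zero => rw [derIter_zero]; exact isLowerSet_univ
  | add_one δ ih =>
    rw [derIter_succ]
    intro x y hyx hx
    refine ⟨ih hyx hx.1, fun hy => ?_⟩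
    rcases hyx.eq_or_lt with rfl | hlt
    · exact hx.2 hy
    · exact disjoint_left.1 ((terminalIn_iff ih).1 hy.1).2 hlt hx.1
  | limit δ hδ ih =>
    rw [derIter_limit _ hδ]
    exact isLowerSet_iInter₂ ih

theorem mem_derIter_succ_iff [IsStronglyAtomic W] {σ : Ordinal} {y : W} :
    y ∈ derIter univ (σ + 1) ↔ y ∈ derIter univ σ ∧
      ¬(TerminalIn (derIter univ σ) y ∧ ∃ u, u ⋖ y ∧
        {y' | u ⋖ y' ∧ TerminalIn (derIter univ σ) y'}.Infinite) := by
  have hS := isLowerSet_derIter (W := W) σ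
  have hset : ∀ u, {y' | UpNbrIn (derIter univ σ) u y' ∧ TerminalIn (derIter univ σ) y'} =
      {y' | u ⋖ y' ∧ TerminalIn (derIter univ σ) y'} := fun u => ext fun y' =>
    ⟨fun h => ⟨((upNbrIn_iff hS).1 h.1).1, h.2⟩, fun h => ⟨(upNbrIn_iff hS).2 ⟨h.1, h.2.1⟩, h.2⟩⟩
  rw [derIter_succ, derStep, Set.mem_sdiff, Set.mem_ofPred_eq]
  refine and_congr_right fun hy => not_congr (and_congr_right fun _ => exists_congr fun u => ?_)
  rw [hset, upNbrIn_iff hS, and_iff_left hy]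

end Derivation

class IsForest (W : Type*) [PartialOrder W] : Prop where
  finite_Iic : ∀ x : W, (Iic x).Finite
  isChain_Iic : ∀ x : W, IsChain (· ≤ ·) (Iic x)

section Forest

variable {W : Type*} [PartialOrder W] [IsForest W]

theorem IsForest.finite_Icc (a b : W) : (Icc a b).Finite :=
  (IsForest.finite_Iic b).subset Icc_subset_Iic_self

instance : IsStronglyAtomic W :=
  letI := LocallyFiniteOrder.ofFiniteIcc (IsForest.finite_Icc (W := W))
  inferInstance

instance : IsStronglyCoatomic W :=
  letI := LocallyFiniteOrder.ofFiniteIcc (IsForest.finite_Icc (W := W))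
  inferInstance

theorem eq_of_covBy_of_covBy {a b c : W} (ha : a ⋖ c) (hb : b ⋖ c) : a = b := by
  rcases (IsForest.isChain_Iic c).total ha.le hb.le with h | h
  · exact ((ha.eq_or_eq h hb.le).resolve_right hb.ne).symm
  · exact (hb.eq_or_eq h ha.le).resolve_right ha.ne

theorem eq_of_covBy_of_le {u a b v : W} (ha : u ⋖ a) (hb : u ⋖ b) (hav : a ≤ v) (hbv : b ≤ v) :
    a = b := by
  rcases (IsForest.isChain_Iic v).total hav hbv with h | h
  · exact (hb.eq_or_eq ha.le h).resolve_left ha.ne'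
  · exact ((ha.eq_or_eq hb.le h).resolve_left hb.ne').symm

theorem exists_le_isMin (w : W) : ∃ r ≤ w, IsMin r := by
  obtain ⟨r, hrw, hr⟩ := (IsForest.finite_Iic w).exists_le_minimal (mem_Iic.2 le_rfl)
  exact ⟨r, hrw, fun z hz => hr.2 (hz.trans hrw) hz⟩

/-- The lower cover `u` of a minimal vertex `t` of the difference is where the branches below `w`
and `v` split. -/
theorem exists_covBy_of_ssubset {v w : W} (hw : ¬∃ y, w ⋖ y) {γ δ : Ordinal} (hγδ : γ ≤ δ)
    (hss : Iic w ∩ derIter univ γ ⊂ Iic v ∩ derIter univ δ) :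
    ∃ u c t : W, u ⋖ c ∧ c ∉ derIter univ γ ∧ u ⋖ t ∧ t ∈ derIter univ δ := by
  obtain ⟨t, ht⟩ := ((IsForest.finite_Iic v).subset
    (sdiff_subset.trans inter_subset_left)).exists_minimal (nonempty_of_ssubset hss)
  obtain ⟨⟨htv, htδ⟩, htA⟩ := ht.1
  have htw : ¬t ≤ w := fun h => htA ⟨h, derIter_antitone _ hγδ htδ⟩
  obtain ⟨r, hrw, hr⟩ := exists_le_isMin w
  have hrA : r ∈ Iic w ∩ derIter univ γ := ⟨hrw, mem_derIter_of_isMin hr γ⟩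
  have hrt : r < t := by
    refine lt_of_le_of_ne ?_ (by rintro rfl; exact htA hrA)
    exact ((IsForest.isChain_Iic v).total (hss.subset hrA).1 htv).elim id (fun h => hr h)
  obtain ⟨u, -, hut⟩ := exists_le_covBy_of_lt hrt
  have huA : u ∈ Iic w ∩ derIter univ γ := by
    by_contra huA
    exact hut.lt.not_ge (ht.2 ⟨⟨hut.le.trans htv, isLowerSet_derIter δ hut.le htδ⟩, huA⟩ hut.le)
  obtain ⟨c, huc, hcw⟩ := exists_covBy_le_of_lt (huA.1.lt_of_ne (by rintro rfl; exact hw ⟨t, hut⟩))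
  refine ⟨u, c, t, huc, fun hcγ => htw ?_, hut, htδ⟩
  exact eq_of_covBy_of_le huc hut (hss.subset ⟨hcw, hcγ⟩).1 htv ▸ hcw

end Forest

section Height

variable {W : Type*} [PartialOrder W]

def HasHeight (u : W) (ζ : Ordinal) : Prop :=
  ∀ δ, Disjoint (Ioi u) (derIter univ δ) ↔ ζ ≤ δ

theorem hasHeight_zero {u : W} (hu : IsMax u) : HasHeight u 0 :=
  fun _ => iff_of_true (disjoint_left.2 fun _ hy _ => hu.not_lt hy) zero_le

structure IsCoverFamily (u : W) (c : ℕ → W) : Prop where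
  lt : ∀ n, u < c n
  exists_le : ∀ y, u < y → ∃ n, c n ≤ y
  eq_of_le : ∀ m n, c m ≤ c n → m = n

namespace IsCoverFamily

variable {u : W} {c : ℕ → W}

theorem injective (hc : IsCoverFamily u c) : Function.Injective c :=
  fun m n h => hc.eq_of_le m n h.le

theorem covBy (hc : IsCoverFamily u c) (n : ℕ) : u ⋖ c n := by
  refine ⟨hc.lt n, fun z huz hzc => ?_⟩
  obtain ⟨m, hmz⟩ := hc.exists_le z huz
  obtain rfl := hc.eq_of_le m n (hmz.trans hzc.le)
  exact hzc.not_ge hmz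

theorem exists_eq_of_covBy (hc : IsCoverFamily u c) {y : W} (hy : u ⋖ y) : ∃ n, c n = y := by
  obtain ⟨n, hny⟩ := hc.exists_le y hy.lt
  exact ⟨n, (hy.eq_or_eq (hc.lt n).le hny).resolve_left (hc.lt n).ne'⟩

end IsCoverFamily

variable [IsForest W] {u : W} {c : ℕ → W} {ords : ℕ → Ordinal} {ξ : Ordinal}

/-- A cover of `u` can only be deleted at a stage `σ + 1` at which infinitely many covers of `u`
are terminal, i.e. infinitely many `ords m` are `≤ σ`. -/
theorem mem_derIter_of_covBy (hc : IsCoverFamily u c) (hh : ∀ n, HasHeight (c n) (ords n))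
    (hcof : ∀ σ, {m | ords m ≤ σ}.Infinite → ξ ≤ σ) {y : W} (hy : u ⋖ y) {δ : Ordinal}
    (hδ : δ ≤ ξ) : y ∈ derIter univ δ := by
  by_contra hyδ
  obtain ⟨σ, hσδ, hyσ, hyσ'⟩ := exists_mem_derIter_not_mem_succ (mem_univ y) hyδ
  obtain ⟨-, u', hu'y, hinf⟩ := not_not.1 (not_and.1 (mem_derIter_succ_iff.not.1 hyσ') hyσ)
  rw [eq_of_covBy_of_covBy hu'y hy] at hinf
  have hsub : {y' | u ⋖ y' ∧ TerminalIn (derIter univ σ) y'} ⊆ c '' {m | ords m ≤ σ} := by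
    rintro y' ⟨huy', hterm⟩
    obtain ⟨m, rfl⟩ := hc.exists_eq_of_covBy huy'
    exact ⟨m, (hh m σ).1 ((terminalIn_iff (isLowerSet_derIter σ)).1 hterm).2, rfl⟩
  have hξσ := hcof σ ((hinf.mono hsub).of_image c)
  exact (Order.lt_add_one_iff.2 le_rfl).not_ge (hσδ.trans (hδ.trans hξσ))

theorem hasHeight_succ (hc : IsCoverFamily u c) (hh : ∀ n, HasHeight (c n) (ords n))
    (hle : ∀ n, ords n ≤ ξ) (hcof : ∀ σ, {m | ords m ≤ σ}.Infinite → ξ ≤ σ) :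
    HasHeight u (ξ + 1) := by
  have hterm : ∀ n, TerminalIn (derIter univ ξ) (c n) := fun n =>
    (terminalIn_iff (isLowerSet_derIter ξ)).2
      ⟨mem_derIter_of_covBy hc hh hcof (hc.covBy n) le_rfl, (hh n ξ).2 (hle n)⟩
  have hdead : Disjoint (Ioi u) (derIter univ (ξ + 1)) := by
    refine disjoint_left.2 fun y huy hy => ?_
    obtain ⟨n, hny⟩ := hc.exists_le y huy
    rcases hny.eq_or_lt with rfl | hlt
    · exact (mem_derIter_succ_iff.1 hy).2 ⟨hterm n, u, hc.covBy n,
        infinite_of_injective_forall_mem hc.injective fun m => ⟨hc.covBy m, hterm m⟩⟩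
    · exact disjoint_left.1 ((hh n ξ).2 (hle n)) hlt (derIter_antitone _ le_self_add hy)
  refine fun δ => ⟨fun h => ?_, fun h => hdead.mono_right (derIter_antitone _ h)⟩
  by_contra hδ
  exact disjoint_left.1 h (hc.lt 0)
    (mem_derIter_of_covBy hc hh hcof (hc.covBy 0) (Order.lt_add_one_iff.1 (not_le.1 hδ)))

end Height

section OrderIsoIci

variable {α β : Type*} [PartialOrder α] [PartialOrder β]

def iciCongr (e : α ≃o β) (x : α) : Ici x ≃o Ici (e x) where
  toEquiv := e.toEquiv.subtypeEquiv fun _ => e.le_iff_le.symm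
  map_rel_iff' := e.le_iff_le

def iciOfIsBot {b : α} (hb : IsBot b) : Ici b ≃o α :=
  (OrderIso.setCongr _ _ (eq_univ_of_forall hb)).trans (OrderIso.Set.univ)

def iciSubtypeVal {u : α} (x : Ici u) : Ici x ≃o Ici (x : α) where
  toFun y := ⟨y.1.1, y.2⟩
  invFun z := ⟨⟨z.1, x.2.trans z.2⟩, z.2⟩
  map_rel_iff' := Iff.rfl

def iciWithBotCoe (a : α) : Ici (a : WithBot α) ≃o Ici a :=
  (OrderIso.ofSurjective
    (OrderEmbedding.ofMapLEIff
      (fun z : Ici a => (⟨z.1, WithBot.coe_le_coe.2 z.2⟩ : Ici (a : WithBot α)))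
      fun _ _ => WithBot.coe_le_coe)
    (by
      rintro ⟨y, hy⟩
      obtain ⟨b, rfl, hab⟩ := WithBot.coe_le_iff.1 hy
      exact ⟨⟨b, hab⟩, rfl⟩)).symm

def iciSigmaMk {ι : Type*} {A : ι → Type*} [∀ i, PartialOrder (A i)] (i : ι) (a : A i) :
    Ici (⟨i, a⟩ : Σ i, A i) ≃o Ici a :=
  (OrderIso.ofSurjective
    (OrderEmbedding.ofMapLEIff (fun z : Ici a =>
      (⟨⟨i, z.1⟩, Sigma.mk_le_mk_iff.2 z.2⟩ : Ici (⟨i, a⟩ : Σ i, A i)))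
      fun _ _ => Sigma.mk_le_mk_iff)
    (by
      rintro ⟨⟨j, b⟩, hy⟩
      change (⟨i, a⟩ : Σ i, A i) ≤ ⟨j, b⟩ at hy
      cases hy with
      | fiber _ _ b hab => exact ⟨⟨b, hab⟩, rfl⟩)).symm

theorem isBot_or_exists_orderIso_Ici (G : α ≃o WithBot β) (u : α) :
    IsBot u ∨ ∃ p : β, Nonempty (Ici u ≃o Ici p) := by
  rcases hGu : G u with _ | p
  · exact Or.inl fun x => G.le_iff_le.1 (hGu ▸ bot_le)
  · exact Or.inr ⟨p, ⟨(iciCongr G u).trans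
      ((OrderIso.setCongr _ _ (congrArg Ici hGu)).trans (iciWithBotCoe p))⟩⟩

end OrderIsoIci

theorem exists_isCoverFamily {W : Type*} [PartialOrder W] {u : W} {A : ℕ → Type*}
    [∀ n, PartialOrder (A n)] (F : Ici u ≃o WithBot (Σ n, A n)) {b : ∀ n, A n}
    (hb : ∀ n, IsBot (b n)) :
    ∃ c : ℕ → W, IsCoverFamily u c ∧ ∀ n, Nonempty (Ici (c n) ≃o A n) := by
  let q : ℕ → WithBot (Σ n, A n) := fun n => ↑(⟨n, b n⟩ : Σ n, A n)
  have hbot : F ⟨u, le_rfl⟩ = ⊥ :=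
    le_bot_iff.1 (F.le_symm_apply.1 (show ⟨u, le_rfl⟩ ≤ F.symm ⊥ from (F.symm ⊥).2))
  have hlt : ∀ y : Ici u, u < y ↔ ⊥ < F y := fun y => by
    rw [← hbot, F.lt_iff_lt]
    exact Iff.rfl
  refine ⟨fun n => F.symm (q n), ⟨fun n => ?_, fun y huy => ?_, fun m n hmn => ?_⟩,
    fun n => ⟨?_⟩⟩
  · exact (hlt _).2 (by rw [F.apply_symm_apply]; exact WithBot.bot_lt_coe _)
  · obtain ⟨⟨n, x⟩, hx⟩ := WithBot.ne_bot_iff_exists.1 ((hlt ⟨y, huy.le⟩).1 huy).ne'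
    exact ⟨n, F.symm_apply_le.2 (hx ▸ WithBot.coe_le_coe.2 (Sigma.mk_le_mk_iff.2 (hb n x)))⟩
  · exact (Sigma.le_def.1 (WithBot.coe_le_coe.1 (F.symm.le_iff_le.1 hmn))).1
  · exact ((iciSubtypeVal _).symm.trans (iciCongr F.symm (q n)).symm).trans
      ((iciWithBotCoe _).trans ((iciSigmaMk n (b n)).trans (iciOfIsBot (hb n))))

open Cardinal

/-- `V γ` is the forest `F_γ`, and `seq γ` the sequence `(γ_n)` from which `F_γ` is built when
`γ` is a limit. -/
structure IsForestFamily (V : Ordinal → Type) [∀ γ, PartialOrder (V γ)]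
    (seq : Ordinal → ℕ → Ordinal) : Prop where
  subsingleton_zero : ∀ x y : V 0, x = y
  nonempty_zero : Nonempty (V 0)
  seq_strictMono : ∀ γ : Ordinal, γ.card ≤ ℵ₀ → Order.IsSuccLimit γ → StrictMono (seq γ)
  seq_succ : ∀ γ : Ordinal, γ.card ≤ ℵ₀ → Order.IsSuccLimit γ →
    ∀ n : ℕ, ∃ δ : Ordinal, seq γ n = δ + 1
  seq_lt : ∀ γ : Ordinal, γ.card ≤ ℵ₀ → Order.IsSuccLimit γ → ∀ n : ℕ, seq γ n < γ
  seq_cofinal : ∀ γ : Ordinal, γ.card ≤ ℵ₀ → Order.IsSuccLimit γ →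
    ∀ δ : Ordinal, δ < γ → ∃ n : ℕ, δ < seq γ n
  succ_iso : ∀ γ : Ordinal, γ.card ≤ ℵ₀ → (γ = 0 ∨ ∃ δ : Ordinal, γ = δ + 1) →
    Nonempty (V (γ + 1) ≃o WithBot (Σ _ : ℕ, V γ))
  limit_succ_iso : ∀ γ : Ordinal, γ.card ≤ ℵ₀ → Order.IsSuccLimit γ →
    Nonempty (V (γ + 1) ≃o WithBot (V γ))
  limit_iso : ∀ γ : Ordinal, γ.card ≤ ℵ₀ → Order.IsSuccLimit γ →
    Nonempty (V γ ≃o (Σ n : ℕ, V (seq γ n)))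

namespace IsForestFamily

variable {V : Ordinal → Type} [∀ γ, PartialOrder (V γ)] {seq : Ordinal → ℕ → Ordinal}

/-- The `ords n` are `ξ` itself, or the sequence `(ξ_n)` when `ξ` is a limit. -/
theorem exists_orderIso_succ (hF : IsForestFamily V seq) {ξ : Ordinal} (hξ : ξ.card ≤ ℵ₀) :
    ∃ ords : ℕ → Ordinal, (∀ n, ords n ≤ ξ) ∧ (∀ n, ¬Order.IsSuccLimit (ords n)) ∧
      (∀ σ, {m | ords m ≤ σ}.Infinite → ξ ≤ σ) ∧
      Nonempty (V (ξ + 1) ≃o WithBot (Σ n, V (ords n))) := by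
  by_cases hlim : Order.IsSuccLimit ξ
  · obtain ⟨G⟩ := hF.limit_succ_iso ξ hξ hlim
    obtain ⟨H⟩ := hF.limit_iso ξ hξ hlim
    refine ⟨seq ξ, fun n => (hF.seq_lt ξ hξ hlim n).le, fun n => ?_, fun σ hσ => ?_,
      ⟨G.trans H.withBotCongr⟩⟩
    · obtain ⟨δ, hδ⟩ := hF.seq_succ ξ hξ hlim n
      rw [hδ]
      exact Order.not_isSuccLimit_add_one δ
    · by_contra! hσξ
      obtain ⟨k, hk⟩ := hF.seq_cofinal ξ hξ hlim σ hσξ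
      obtain ⟨m, hm, hkm⟩ := hσ.exists_gt k
      exact hk.not_ge (((hF.seq_strictMono ξ hξ hlim) hkm).le.trans hm)
  · obtain ⟨G⟩ := hF.succ_iso ξ hξ (eq_zero_or_exists_eq_add_one hlim)
    exact ⟨fun _ => ξ, fun _ => le_rfl, fun _ => hlim,
      fun σ hσ => hσ.nonempty.elim fun _ h => h, ⟨G⟩⟩

theorem exists_isBot (hF : IsForestFamily V seq) {ζ : Ordinal} (hζ : ζ.card ≤ ℵ₀)
    (hs : ¬Order.IsSuccLimit ζ) : ∃ b : V ζ, IsBot b := by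
  rcases eq_zero_or_exists_eq_add_one hs with rfl | ⟨ξ, rfl⟩
  · obtain ⟨b⟩ := hF.nonempty_zero
    exact ⟨b, fun x => (hF.subsingleton_zero b x).le⟩
  · obtain ⟨_, -, -, -, ⟨G⟩⟩ :=
      hF.exists_orderIso_succ ((Ordinal.card_le_card le_self_add).trans hζ)
    exact ⟨G.symm ⊥, fun x => G.symm_apply_le.2 bot_le⟩

theorem exists_orderIso_Ici (hF : IsForestFamily V seq) {η : Ordinal} (hη : η.card ≤ ℵ₀)
    (u : V η) : ∃ ζ ≤ η, ¬Order.IsSuccLimit ζ ∧ Nonempty (Ici u ≃o V ζ) := by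
  induction η using WellFoundedLT.induction with
  | _ η ih =>
  by_cases hlim : Order.IsSuccLimit η
  · obtain ⟨G⟩ := hF.limit_iso η hη hlim
    have hlt := hF.seq_lt η hη hlim (G u).1
    obtain ⟨ζ, hζ, hs, ⟨K⟩⟩ := ih _ hlt ((Ordinal.card_le_card hlt.le).trans hη) (G u).2
    exact ⟨ζ, hζ.trans hlt.le, hs, ⟨(iciCongr G u).trans ((iciSigmaMk _ _).trans K)⟩⟩
  rcases eq_zero_or_exists_eq_add_one hlim with rfl | ⟨ξ, rfl⟩
  · exact ⟨0, le_rfl, Ordinal.not_isSuccLimit_zero,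
      ⟨iciOfIsBot fun x => (hF.subsingleton_zero u x).le⟩⟩
  obtain ⟨ords, hle, -, -, ⟨G⟩⟩ :=
    hF.exists_orderIso_succ ((Ordinal.card_le_card le_self_add).trans hη)
  rcases isBot_or_exists_orderIso_Ici G u with hu | ⟨⟨n, x⟩, ⟨J⟩⟩
  · exact ⟨ξ + 1, le_rfl, Order.not_isSuccLimit_add_one ξ, ⟨iciOfIsBot hu⟩⟩
  have hlt : ords n < ξ + 1 := (hle n).trans_lt (Order.lt_add_one_iff.2 le_rfl)
  obtain ⟨ζ, hζ, hs, ⟨K⟩⟩ := ih _ hlt ((Ordinal.card_le_card hlt.le).trans hη) x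
  exact ⟨ζ, hζ.trans hlt.le, hs,
    ⟨J.trans ((iciSigmaMk (A := fun n => V (ords n)) n x).trans K)⟩⟩

variable {W : Type*} [PartialOrder W]

theorem exists_isCoverFamily_of_orderIso_succ (hF : IsForestFamily V seq) {ξ : Ordinal}
    (hξ : ξ.card ≤ ℵ₀) {u : W} (F : Ici u ≃o V (ξ + 1)) :
    ∃ (c : ℕ → W) (ords : ℕ → Ordinal), IsCoverFamily u c ∧
      (∀ n, Nonempty (Ici (c n) ≃o V (ords n))) ∧ (∀ n, ords n ≤ ξ) ∧
      (∀ n, ¬Order.IsSuccLimit (ords n)) ∧ (∀ σ, {m | ords m ≤ σ}.Infinite → ξ ≤ σ) := by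
  obtain ⟨ords, hle, hs, hcof, ⟨G⟩⟩ := hF.exists_orderIso_succ hξ
  choose b hb using fun n => hF.exists_isBot ((Ordinal.card_le_card (hle n)).trans hξ) (hs n)
  obtain ⟨c, hc, hiso⟩ := exists_isCoverFamily (F.trans G) hb
  exact ⟨c, ords, hc, hiso, hle, hs, hcof⟩

variable [IsForest W]

theorem hasHeight_of_orderIso (hF : IsForestFamily V seq) {ζ : Ordinal} (hζ : ζ.card ≤ ℵ₀)
    (hs : ¬Order.IsSuccLimit ζ) {u : W} (F : Ici u ≃o V ζ) : HasHeight u ζ := by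
  induction ζ using WellFoundedLT.induction generalizing u with
  | _ ζ ih =>
  rcases eq_zero_or_exists_eq_add_one hs with rfl | ⟨ξ, rfl⟩
  · exact hasHeight_zero fun y huy =>
      (congrArg Subtype.val (F.injective (hF.subsingleton_zero (F ⟨y, huy⟩) (F ⟨u, le_rfl⟩)))).le
  obtain ⟨c, ords, hc, hiso, hle, hs', hcof⟩ :=
    hF.exists_isCoverFamily_of_orderIso_succ ((Ordinal.card_le_card le_self_add).trans hζ) F
  refine hasHeight_succ hc (fun n => ?_) hle hcof
  have hlt : ords n < ξ + 1 := (hle n).trans_lt (Order.lt_add_one_iff.2 le_rfl)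
  exact ih _ hlt ((Ordinal.card_le_card hlt.le).trans hζ) (hs' n) (hiso n).some

theorem mem_derIter_of_covBy_of_orderIso (hF : IsForestFamily V seq) {ξ : Ordinal}
    (hξ : ξ.card ≤ ℵ₀) {u : W} (F : Ici u ≃o V (ξ + 1)) {y : W} (hy : u ⋖ y) {δ : Ordinal}
    (hδ : δ ≤ ξ) : y ∈ derIter univ δ := by
  obtain ⟨c, ords, hc, hiso, hle, hs, hcof⟩ := hF.exists_isCoverFamily_of_orderIso_succ hξ F
  exact mem_derIter_of_covBy hc (fun n => hF.hasHeight_of_orderIso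
    ((Ordinal.card_le_card (hle n)).trans hξ) (hs n) (hiso n).some) hcof hy hδ

end IsForestFamily

theorem statement9
    (V : Ordinal → Type) [∀ γ : Ordinal, PartialOrder (V γ)]
    (seq : Ordinal → ℕ → Ordinal)
    (hV0 : ∀ x y : V 0, x = y) (hV0ne : Nonempty (V 0))
    (hchainfin : ∀ γ : Ordinal, γ.card ≤ Cardinal.aleph0 → ∀ x : V γ, {y : V γ | y ≤ x}.Finite)
    (hchainlin : ∀ γ : Ordinal, γ.card ≤ Cardinal.aleph0 →
      ∀ x y w : V γ, y ≤ x → w ≤ x → y ≤ w ∨ w ≤ y)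
    (hseqmono : ∀ γ : Ordinal, γ.card ≤ Cardinal.aleph0 → Order.IsSuccLimit γ → StrictMono (seq γ))
    (hseqsucc : ∀ γ : Ordinal, γ.card ≤ Cardinal.aleph0 → Order.IsSuccLimit γ →
      ∀ n : ℕ, ∃ δ : Ordinal, seq γ n = δ + 1)
    (hseqlt : ∀ γ : Ordinal, γ.card ≤ Cardinal.aleph0 → Order.IsSuccLimit γ → ∀ n : ℕ, seq γ n < γ)
    (hseqcof : ∀ γ : Ordinal, γ.card ≤ Cardinal.aleph0 → Order.IsSuccLimit γ →
      ∀ δ : Ordinal, δ < γ → ∃ n : ℕ, δ < seq γ n)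
    (hsucc : ∀ γ : Ordinal, γ.card ≤ Cardinal.aleph0 → (γ = 0 ∨ ∃ δ : Ordinal, γ = δ + 1) →
      Nonempty (V (γ + 1) ≃o WithBot (Σ _ : ℕ, V γ)))
    (hlimsucc : ∀ γ : Ordinal, γ.card ≤ Cardinal.aleph0 → Order.IsSuccLimit γ →
      Nonempty (V (γ + 1) ≃o WithBot (V γ)))
    (hlim : ∀ γ : Ordinal, γ.card ≤ Cardinal.aleph0 → Order.IsSuccLimit γ →
      Nonempty (V γ ≃o (Σ n : ℕ, V (seq γ n))))
    {Z : Type*} [NormedAddCommGroup Z] [NormedSpace ℝ Z] [CompleteSpace Z]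
    (z : ℕ → Z) (zs : ℕ → StrongDual ℝ Z) (C K : ℝ)
    (hz1 : ∀ i : ℕ, 1 ≤ ‖z i‖)
    (hzC : ∀ k : ℕ, ‖∑ i ∈ Finset.range k, z i‖ ≤ C)
    (hbasic : ∀ m n : ℕ, m ≤ n → ∀ a : ℕ → ℝ,
      ‖∑ i ∈ Finset.range m, a i • z i‖ ≤ K * ‖∑ i ∈ Finset.range n, a i • z i‖)
    (hspan : (Submodule.span ℝ (Set.range z)).topologicalClosure = ⊤)
    (hbi : ∀ i j : ℕ, zs j (z i) = if i = j then (1 : ℝ) else 0)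
    (α : Ordinal) (hαc : α.card ≤ Cardinal.aleph0)
    (e : V α → ℕ) (heinj : Function.Injective e)
    (hemono : ∀ x y : V α, x < y → e x < e y)
    (hepos : ∀ x : V α, e x ≠ 0)
    (β : Ordinal) (hβ : β < α)
    (v w : V α) (hv : ¬∃ y, v ⋖ y) (hw : ¬∃ y, w ⋖ y)
    (γ : Ordinal) (hγ : γ ≤ β) :
    ¬(e '' ({u | u ≤ w} ∩ derIter (Set.univ : Set (V α)) γ)
        ⊂ e '' ({u | u ≤ v} ∩ derIter (Set.univ : Set (V α)) (β + 1))) := by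
  intro hss
  have : IsForest (V α) := ⟨hchainfin α hαc, fun x a ha b hb _ => hchainlin α hαc x a b ha hb⟩
  have hF : IsForestFamily V seq :=
    ⟨hV0, hV0ne, hseqmono, hseqsucc, hseqlt, hseqcof, hsucc, hlimsucc, hlim⟩
  obtain ⟨u, c, t, huc, hcγ, hut, htβ⟩ := exists_covBy_of_ssubset hw (hγ.trans le_self_add)
    ((heinj.injOn.image_ssubset_image_iff (subset_univ _) (subset_univ _)).1 hss)
  obtain ⟨ζ, hζα, hs, ⟨F⟩⟩ := hF.exists_orderIso_Ici hαc u
  have hζ : ζ.card ≤ ℵ₀ := (Ordinal.card_le_card hζα).trans hαc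
  have hβζ : β + 1 < ζ := not_le.1 fun h =>
    disjoint_left.1 ((hF.hasHeight_of_orderIso hζ hs F (β + 1)).2 h) hut.lt htβ
  obtain ⟨ξ, rfl⟩ := (eq_zero_or_exists_eq_add_one hs).resolve_left hβζ.ne_bot
  exact hcγ (hF.mem_derIter_of_covBy_of_orderIso ((Ordinal.card_le_card le_self_add).trans hζ) F
    huc (hγ.trans (Order.lt_add_one_iff.1 (le_self_add.trans_lt hβζ))))

end Paper
end
end

section
/- If the sequence of convex combinations (Σ_{x∈W} a_{x,i} x)_{i=1}^∞ is bounded in norm in Z*, then the series Σ_{x∈W} p_x x and Σ_{x∈I} p_x x converge strongly (in norm) in Z*, the series Σ_{y∈D} s_y y converges strongly in Z*, and consequently the series Σ_{y∈D} (s_y − Σ_{x : v(x)≻v(y)} p_x) y converges strongly in Z* (note s_y ≥ Σ_{x : v(x)≻v(y)} p_x for every y ∈ D). -/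
/-!
Every vector of `W`, and every truncation `y(x)`, is a finite nonnegative combination of the
coordinate functionals `z*_n`. Its norm is at most `2K` times its coordinate sum, and evaluating
it at a long enough partial sum `∑_{n<k} z_n` returns exactly that coordinate sum. Evaluating the
`i`-th convex combination at such a partial sum therefore gives `∑ₓ a_{x,i} · coordSum x ≤ M C`.
This bound passes to the limits `p_x` on every finite set of vectors, and to the limits `s_y` by
grouping the `x` along the fibres of `x ↦ y(x)`, on which the coordinate sum can only decrease.
Hence all the series converge absolutely in the Banach space `Z*`.
-/

open Set Filter Topology

noncomputable section

namespace Paper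

section Summation

variable {α β : Type*}

theorem sum_le_finsum_of_nonneg {M : Type*} [AddCommMonoid M] [PartialOrder M]
    [IsOrderedAddMonoid M] {f : α → M} (hf : 0 ≤ f) (hfin : (Function.support f).Finite)
    (s : Finset α) : ∑ x ∈ s, f x ≤ ∑ᶠ x, f x := by
  classical
  rw [finsum_eq_sum_of_support_subset f (s := s ∪ hfin.toFinset) (by simp)]
  exact Finset.sum_le_sum_of_subset_of_nonneg Finset.subset_union_left fun x _ _ => hf x

theorem sum_subtype_le_finsum_mem {f : α → ℝ} (hf : 0 ≤ f) (hfin : (Function.support f).Finite)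
    {s : Set α} (u : Finset s) : ∑ x ∈ u, f x ≤ ∑ᶠ x ∈ s, f x := by
  rw [← finsum_subtype_eq_finsum_cond]
  exact sum_le_finsum_of_nonneg (f := fun x : s => f x) (fun x => hf x)
    (hfin.preimage Subtype.val_injective.injOn) u

theorem summable_subtype_of_sum_norm_le {E : Type*} [NormedAddCommGroup E] [CompleteSpace E]
    {f : α → E} {S : Set α} {B : ℝ} (h : ∀ F : Finset α, ↑F ⊆ S → ∑ x ∈ F, ‖f x‖ ≤ B) :
    Summable fun x : S => f x :=
  Summable.of_norm <| summable_of_sum_le (fun _ => norm_nonneg _) fun u => by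
    simpa [Finset.sum_map] using h (u.map (Function.Embedding.subtype _)) (by simp)

theorem sum_finsum_fiber_mul_le (f : α → β) (S : Set α) {a g : α → ℝ} {h : β → ℝ}
    (ha : 0 ≤ a) (hag : ∀ x, 0 ≤ a x * g x) (hfin : (Function.support a).Finite)
    (hhg : ∀ x ∈ S, h (f x) ≤ g x) (F : Finset β) :
    ∑ y ∈ F, (∑ᶠ x ∈ {x | x ∈ S ∧ f x = y}, a x) * h y ≤ ∑ᶠ x, a x * g x := by
  classical
  set T := {x ∈ hfin.toFinset | x ∈ S}
  have hfiber : ∀ y, ∑ᶠ x ∈ {x | x ∈ S ∧ f x = y}, a x = ∑ x ∈ T with f x = y, a x := by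
    intro y
    rw [finsum_mem_eq_sum_filter _ _ hfin, Finset.filter_filter]
    rfl
  calc ∑ y ∈ F, (∑ᶠ x ∈ {x | x ∈ S ∧ f x = y}, a x) * h y
      = ∑ y ∈ F, ∑ x ∈ T with f x = y, a x * h (f x) := by
        refine Finset.sum_congr rfl fun y _ => ?_
        rw [hfiber, Finset.sum_mul]
        exact Finset.sum_congr rfl fun x hx => by rw [(Finset.mem_filter.mp hx).2]
    _ ≤ ∑ y ∈ F, ∑ x ∈ T with f x = y, a x * g x := by
        gcongr with y _ x hx
        · exact ha x
        · exact hhg x (Finset.mem_filter.mp (Finset.mem_filter.mp hx).1).2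
    _ ≤ ∑ x ∈ T, a x * g x :=
        Finset.sum_fiberwise_le_sum_of_sum_fiber_nonneg fun y _ => Finset.sum_nonneg fun x _ => hag x
    _ ≤ ∑ᶠ x, a x * g x :=
        sum_le_finsum_of_nonneg hag (hfin.subset (Function.support_mul_subset_left _ _)) T

theorem tsum_le_of_tendsto_finsum_mem {a : ℕ → α → ℝ} {p : α → ℝ} {S : Set α} {σ : ℝ}
    (ha : ∀ i, 0 ≤ a i) (hfin : ∀ i, (Function.support (a i)).Finite)
    (hp : ∀ x ∈ S, Tendsto (a · x) atTop (𝓝 (p x)))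
    (hσ : Tendsto (fun i => ∑ᶠ x ∈ S, a i x) atTop (𝓝 σ)) : ∑' x : S, p x ≤ σ :=
  Real.tsum_le_of_sum_le (fun x => ge_of_tendsto' (hp x x.2) fun i => ha i x) fun u =>
    le_of_tendsto_of_tendsto' (tendsto_finsetSum u fun x _ => hp x x.2) hσ fun i =>
      sum_subtype_le_finsum_mem (ha i) (hfin i) u

end Summation

section BasicSequence

variable {Z : Type*} [NormedAddCommGroup Z] [NormedSpace ℝ Z] {z : ℕ → Z}
  {zs : ℕ → StrongDual ℝ Z} {K : ℝ}

theorem norm_smul_le_of_basic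
    (hbasic : ∀ m n : ℕ, m ≤ n → ∀ a : ℕ → ℝ,
      ‖∑ i ∈ Finset.range m, a i • z i‖ ≤ K * ‖∑ i ∈ Finset.range n, a i • z i‖)
    (c : ℕ → ℝ) {n N : ℕ} (hn : n < N) :
    ‖c n • z n‖ ≤ 2 * K * ‖∑ i ∈ Finset.range N, c i • z i‖ :=
  calc ‖c n • z n‖
      = ‖∑ i ∈ Finset.range (n + 1), c i • z i - ∑ i ∈ Finset.range n, c i • z i‖ := by
        rw [Finset.sum_range_succ_sub_sum]
    _ ≤ ‖∑ i ∈ Finset.range (n + 1), c i • z i‖ + ‖∑ i ∈ Finset.range n, c i • z i‖ :=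
        norm_sub_le _ _
    _ ≤ K * ‖∑ i ∈ Finset.range N, c i • z i‖ + K * ‖∑ i ∈ Finset.range N, c i • z i‖ :=
        add_le_add (hbasic _ _ hn c) (hbasic _ _ hn.le c)
    _ = 2 * K * ‖∑ i ∈ Finset.range N, c i • z i‖ := by ring

theorem abs_coord_le_of_mem_span (hz1 : ∀ i : ℕ, 1 ≤ ‖z i‖)
    (hbasic : ∀ m n : ℕ, m ≤ n → ∀ a : ℕ → ℝ,
      ‖∑ i ∈ Finset.range m, a i • z i‖ ≤ K * ‖∑ i ∈ Finset.range n, a i • z i‖)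
    (hbi : ∀ i j : ℕ, zs j (z i) = if i = j then (1 : ℝ) else 0) (n : ℕ) {v : Z}
    (hv : v ∈ Submodule.span ℝ (Set.range z)) : |zs n v| ≤ 2 * K * ‖v‖ := by
  obtain ⟨c, rfl⟩ := Finsupp.mem_span_range_iff_exists_finsupp.mp hv
  obtain ⟨N₀, hN₀⟩ := Finset.exists_nat_subset_range c.support
  set N := max (n + 1) N₀
  have hsum : (c.sum fun i r => r • z i) = ∑ i ∈ Finset.range N, c i • z i :=
    Finsupp.sum_of_support_subset c (hN₀.trans (Finset.range_subset_range.mpr (le_max_right _ _)))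
      _ fun i _ => zero_smul ℝ (z i)
  have hcoord : zs n (∑ i ∈ Finset.range N, c i • z i) = c n := by
    simp [hbi, Finset.sum_ite_eq', show n < N from lt_max_of_lt_left n.lt_succ_self]
  rw [hsum, hcoord]
  calc |c n| ≤ |c n| * ‖z n‖ := le_mul_of_one_le_right (abs_nonneg _) (hz1 n)
    _ = ‖c n • z n‖ := by rw [norm_smul, Real.norm_eq_abs]
    _ ≤ 2 * K * ‖∑ i ∈ Finset.range N, c i • z i‖ :=
        norm_smul_le_of_basic hbasic c (lt_max_of_lt_left n.lt_succ_self)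

theorem norm_coord_le (hz1 : ∀ i : ℕ, 1 ≤ ‖z i‖)
    (hbasic : ∀ m n : ℕ, m ≤ n → ∀ a : ℕ → ℝ,
      ‖∑ i ∈ Finset.range m, a i • z i‖ ≤ K * ‖∑ i ∈ Finset.range n, a i • z i‖)
    (hspan : (Submodule.span ℝ (Set.range z)).topologicalClosure = ⊤)
    (hbi : ∀ i j : ℕ, zs j (z i) = if i = j then (1 : ℝ) else 0) (n : ℕ) :
    ‖zs n‖ ≤ 2 * K := by
  have hK : 1 ≤ K := by
    have h := hbasic 1 1 le_rfl fun _ => 1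
    simp only [Finset.range_one, Finset.sum_singleton, one_smul] at h
    nlinarith [hz1 0]
  refine (zs n).opNorm_le_bound (by positivity) fun v => ?_
  exact (Submodule.dense_iff_topologicalClosure_eq_top.mpr hspan).induction
    (P := fun v => ‖zs n v‖ ≤ 2 * K * ‖v‖) (fun v hv => abs_coord_le_of_mem_span hz1 hbasic hbi n hv)
    (isClosed_le (by fun_prop) (by fun_prop)) v

end BasicSequence

section CoordComb

variable {Z : Type*} [NormedAddCommGroup Z] [NormedSpace ℝ Z] (z : ℕ → Z)
  (zs : ℕ → StrongDual ℝ Z)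

def coordSum (x : StrongDual ℝ Z) : ℝ := ∑ᶠ n, x (z n)

def IsNonnegCoordComb (x : StrongDual ℝ Z) : Prop :=
  ∃ T : Finset ℕ, (∀ m, 0 ≤ x (z m)) ∧ (∀ m ∉ T, x (z m) = 0) ∧ x = ∑ n ∈ T, x (z n) • zs n

theorem coordSum_eq_sum {x : StrongDual ℝ Z} {T : Finset ℕ} (hT : ∀ m ∉ T, x (z m) = 0) :
    coordSum z x = ∑ n ∈ T, x (z n) :=
  finsum_eq_sum_of_support_subset _ fun m hm => by_contra fun h => hm (hT m h)

variable {z zs}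

theorem isNonnegCoordComb_finsum_mem
    (hbi : ∀ i j : ℕ, zs j (z i) = if i = j then (1 : ℝ) else 0) {ι : Type*} {e : ι → ℕ}
    (he : Function.Injective e) {c : ι → ℝ} (hc : ∀ u, 0 ≤ c u) {A : Set ι} (hA : A.Finite) :
    IsNonnegCoordComb z zs (∑ᶠ u ∈ A, c u • zs (e u)) := by
  classical
  rw [finsum_mem_eq_finite_toFinset_sum _ hA]
  set F := hA.toFinset
  have hcoord : ∀ m, (∑ u ∈ F, c u • zs (e u)) (z m) = ∑ u ∈ F, if e u = m then c u else 0 := by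
    intro m
    simp only [sum_apply, smul_apply, hbi, smul_eq_mul, mul_ite, mul_one, mul_zero, eq_comm]
  have hcoord_e : ∀ u ∈ F, (∑ u ∈ F, c u • zs (e u)) (z (e u)) = c u := fun u hu => by
    rw [hcoord, Finset.sum_eq_single_of_mem u hu fun u' _ hne => if_neg (he.ne hne), if_pos rfl]
  refine ⟨F.image e, fun m => ?_, fun m hm => ?_, ?_⟩
  · rw [hcoord]
    exact Finset.sum_nonneg fun u _ => by split_ifs <;> simp [hc u]
  · rw [hcoord]
    exact Finset.sum_eq_zero fun u hu => if_neg fun h => hm (Finset.mem_image.mpr ⟨u, hu, h⟩)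
  · rw [Finset.sum_image fun u _ u' _ h => he h]
    exact Finset.sum_congr rfl fun u hu => by rw [hcoord_e u hu]

theorem sub_smul_coord_apply {x : StrongDual ℝ Z}
    (hbi : ∀ i j : ℕ, zs j (z i) = if i = j then (1 : ℝ) else 0) (t : ℕ) (m : ℕ) :
    (x - x (z t) • zs t) (z m) = if m = t then 0 else x (z m) := by
  split_ifs with h <;> simp [hbi, h]

namespace IsNonnegCoordComb

variable {x : StrongDual ℝ Z}

theorem coordSum_nonneg (hx : IsNonnegCoordComb z zs x) : 0 ≤ coordSum z x :=
  finsum_nonneg hx.choose_spec.1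

theorem norm_le {B : ℝ} (hzs : ∀ n, ‖zs n‖ ≤ B) (hx : IsNonnegCoordComb z zs x) :
    ‖x‖ ≤ B * coordSum z x := by
  obtain ⟨T, h0, hT, hxT⟩ := hx
  rw [coordSum_eq_sum z hT, Finset.mul_sum]
  conv_lhs => rw [hxT]
  refine (norm_sum_le _ _).trans (Finset.sum_le_sum fun n _ => ?_)
  rw [norm_smul, Real.norm_of_nonneg (h0 n), mul_comm B]
  exact mul_le_mul_of_nonneg_left (hzs n) (h0 n)

theorem eventually_apply_sum_range (hx : IsNonnegCoordComb z zs x) :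
    ∀ᶠ k in atTop, x (∑ n ∈ Finset.range k, z n) = coordSum z x := by
  obtain ⟨T, -, hT, -⟩ := hx
  obtain ⟨N, hN⟩ := Finset.exists_nat_subset_range T
  filter_upwards [eventually_ge_atTop N] with k hk
  rw [map_sum, coordSum_eq_sum z hT]
  exact (Finset.sum_subset (hN.trans (Finset.range_subset_range.mpr hk)) fun m _ hm => hT m hm).symm

theorem sub_smul_coord
    (hbi : ∀ i j : ℕ, zs j (z i) = if i = j then (1 : ℝ) else 0) (t : ℕ)
    (hx : IsNonnegCoordComb z zs x) :
    IsNonnegCoordComb z zs (x - x (z t) • zs t) := by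
  obtain ⟨T, h0, hT, hxT⟩ := hx
  refine ⟨T, fun m => ?_, fun m hm => ?_, ?_⟩
  · rw [sub_smul_coord_apply hbi]; split_ifs <;> simp [h0 m]
  · rw [sub_smul_coord_apply hbi]; split_ifs <;> simp [hT m hm]
  · have hterm : ∀ n, (x - x (z t) • zs t) (z n) • zs n =
        x (z n) • zs n - if n = t then x (z t) • zs t else 0 := fun n => by
      rw [sub_smul_coord_apply hbi]; split_ifs with h <;> simp [h]
    rw [Finset.sum_congr rfl fun n _ => hterm n, Finset.sum_sub_distrib, ← hxT,
      Finset.sum_ite_eq']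
    split_ifs with ht
    · rfl
    · simp [hT t ht]

theorem coordSum_sub_smul_coord_le
    (hbi : ∀ i j : ℕ, zs j (z i) = if i = j then (1 : ℝ) else 0) (t : ℕ)
    (hx : IsNonnegCoordComb z zs x) :
    coordSum z (x - x (z t) • zs t) ≤ coordSum z x := by
  obtain ⟨T, h0, hT, -⟩ := hx
  have hT' : ∀ m ∉ T, (x - x (z t) • zs t) (z m) = 0 := fun m hm => by
    rw [sub_smul_coord_apply hbi]; split_ifs <;> simp [hT m hm]
  rw [coordSum_eq_sum z hT, coordSum_eq_sum z hT']
  exact Finset.sum_le_sum fun m _ => by rw [sub_smul_coord_apply hbi]; split_ifs <;> simp [h0 m]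

end IsNonnegCoordComb

end CoordComb

section ConvexCombination

variable {Z : Type*} [NormedAddCommGroup Z] [NormedSpace ℝ Z] {z : ℕ → Z}
  {zs : ℕ → StrongDual ℝ Z}

theorem isNonnegCoordComb_of_mem_XsetOf
    (hbi : ∀ i j : ℕ, zs j (z i) = if i = j then (1 : ℝ) else 0) {P : Type*} [PartialOrder P]
    {e : P → ℕ} (he : Function.Injective e) (hfin : ∀ v : P, {w | w ≤ v}.Finite) {S : Set P}
    {x : StrongDual ℝ Z} (hx : x ∈ XsetOf e zs S) : IsNonnegCoordComb z zs x := by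
  obtain ⟨v, -, rfl⟩ := hx
  exact isNonnegCoordComb_finsum_mem hbi he (fun u => Nat.cast_nonneg _)
    ((hfin v).subset Set.inter_subset_left)

theorem sum_mul_coordSum_le {T : Finset (StrongDual ℝ Z)} {a : StrongDual ℝ Z → ℝ} {M C : ℝ}
    (hT : ∀ x ∈ T, IsNonnegCoordComb z zs x) (hM : ‖∑ x ∈ T, a x • x‖ ≤ M)
    (hzC : ∀ k : ℕ, ‖∑ i ∈ Finset.range k, z i‖ ≤ C) :
    ∑ x ∈ T, a x * coordSum z x ≤ M * C := by
  obtain ⟨k, hk⟩ :=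
    ((eventually_all_finset T).mpr fun x hx => (hT x hx).eventually_apply_sum_range).exists
  calc ∑ x ∈ T, a x * coordSum z x = (∑ x ∈ T, a x • x) (∑ n ∈ Finset.range k, z n) := by
        simp only [sum_apply, smul_apply, smul_eq_mul]
        exact Finset.sum_congr rfl fun x hx => by rw [hk x hx]
    _ ≤ ‖(∑ x ∈ T, a x • x) (∑ n ∈ Finset.range k, z n)‖ := Real.le_norm_self _
    _ ≤ ‖∑ x ∈ T, a x • x‖ * ‖∑ n ∈ Finset.range k, z n‖ := ContinuousLinearMap.le_opNorm _ _
    _ ≤ M * C := mul_le_mul hM (hzC k) (norm_nonneg _) ((norm_nonneg _).trans hM)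

theorem finsum_mul_coordSum_le {a : StrongDual ℝ Z → ℝ} {M C : ℝ}
    (ha : (Function.support a).Finite)
    (hgood : ∀ x ∈ Function.support a, IsNonnegCoordComb z zs x) (hM : ‖∑ᶠ x, a x • x‖ ≤ M)
    (hzC : ∀ k : ℕ, ‖∑ i ∈ Finset.range k, z i‖ ≤ C) :
    ∑ᶠ x, a x * coordSum z x ≤ M * C := by
  rw [finsum_eq_sum_of_support_subset _ (s := ha.toFinset)
      fun x hx => ha.mem_toFinset.mpr (left_ne_zero_of_mul hx)]
  rw [finsum_eq_sum_of_support_subset _ (s := ha.toFinset)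
      fun x hx => ha.mem_toFinset.mpr (left_ne_zero_of_smul hx)] at hM
  exact sum_mul_coordSum_le (fun x hx => hgood x (ha.mem_toFinset.mp hx)) hM hzC

theorem summable_smul_of_sum_mul_coordSum_le {B M : ℝ} (hzs : ∀ n, ‖zs n‖ ≤ B)
    {S : Set (StrongDual ℝ Z)} {c : StrongDual ℝ Z → ℝ} (hc : ∀ x ∈ S, 0 ≤ c x)
    (hgood : ∀ x ∈ S, IsNonnegCoordComb z zs x)
    (hM : ∀ F : Finset (StrongDual ℝ Z), ↑F ⊆ S → ∑ x ∈ F, c x * coordSum z x ≤ M) :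
    Summable fun x : S => c x • (x : StrongDual ℝ Z) := by
  have hB : 0 ≤ B := (norm_nonneg _).trans (hzs 0)
  refine summable_subtype_of_sum_norm_le (f := fun x => c x • x) (B := B * M) fun F hF => ?_
  calc ∑ x ∈ F, ‖c x • x‖ ≤ ∑ x ∈ F, B * (c x * coordSum z x) := by
        refine Finset.sum_le_sum fun x hx => ?_
        rw [norm_smul, Real.norm_of_nonneg (hc x (hF hx)), mul_left_comm]
        exact mul_le_mul_of_nonneg_left ((hgood x (hF hx)).norm_le hzs) (hc x (hF hx))
    _ ≤ B * M := by rw [← Finset.mul_sum]; exact mul_le_mul_of_nonneg_left (hM F hF) hB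

end ConvexCombination

theorem statement18
    (V : Ordinal → Type) [∀ γ : Ordinal, PartialOrder (V γ)]
    (seq : Ordinal → ℕ → Ordinal)
    (hV0 : ∀ x y : V 0, x = y) (hV0ne : Nonempty (V 0))
    (hchainfin : ∀ γ : Ordinal, γ.card ≤ Cardinal.aleph0 → ∀ x : V γ, {y : V γ | y ≤ x}.Finite)
    (hchainlin : ∀ γ : Ordinal, γ.card ≤ Cardinal.aleph0 →
      ∀ x y w : V γ, y ≤ x → w ≤ x → y ≤ w ∨ w ≤ y)
    (hseqmono : ∀ γ : Ordinal, γ.card ≤ Cardinal.aleph0 → Order.IsSuccLimit γ → StrictMono (seq γ))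
    (hseqsucc : ∀ γ : Ordinal, γ.card ≤ Cardinal.aleph0 → Order.IsSuccLimit γ →
      ∀ n : ℕ, ∃ δ : Ordinal, seq γ n = δ + 1)
    (hseqlt : ∀ γ : Ordinal, γ.card ≤ Cardinal.aleph0 → Order.IsSuccLimit γ → ∀ n : ℕ, seq γ n < γ)
    (hseqcof : ∀ γ : Ordinal, γ.card ≤ Cardinal.aleph0 → Order.IsSuccLimit γ →
      ∀ δ : Ordinal, δ < γ → ∃ n : ℕ, δ < seq γ n)
    (hsucc : ∀ γ : Ordinal, γ.card ≤ Cardinal.aleph0 → (γ = 0 ∨ ∃ δ : Ordinal, γ = δ + 1) →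
      Nonempty (V (γ + 1) ≃o WithBot (Σ _ : ℕ, V γ)))
    (hlimsucc : ∀ γ : Ordinal, γ.card ≤ Cardinal.aleph0 → Order.IsSuccLimit γ →
      Nonempty (V (γ + 1) ≃o WithBot (V γ)))
    (hlim : ∀ γ : Ordinal, γ.card ≤ Cardinal.aleph0 → Order.IsSuccLimit γ →
      Nonempty (V γ ≃o (Σ n : ℕ, V (seq γ n))))
    {Z : Type*} [NormedAddCommGroup Z] [NormedSpace ℝ Z] [CompleteSpace Z]
    (z : ℕ → Z) (zs : ℕ → StrongDual ℝ Z) (C K : ℝ)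
    (hz1 : ∀ i : ℕ, 1 ≤ ‖z i‖)
    (hzC : ∀ k : ℕ, ‖∑ i ∈ Finset.range k, z i‖ ≤ C)
    (hbasic : ∀ m n : ℕ, m ≤ n → ∀ a : ℕ → ℝ,
      ‖∑ i ∈ Finset.range m, a i • z i‖ ≤ K * ‖∑ i ∈ Finset.range n, a i • z i‖)
    (hspan : (Submodule.span ℝ (Set.range z)).topologicalClosure = ⊤)
    (hbi : ∀ i j : ℕ, zs j (z i) = if i = j then (1 : ℝ) else 0)
    (α : Ordinal) (hαc : α.card ≤ Cardinal.aleph0)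
    (e : V α → ℕ) (heinj : Function.Injective e)
    (hemono : ∀ x y : V α, x < y → e x < e y)
    (hepos : ∀ x : V α, e x ≠ 0)
    (β : Ordinal) (hβ : β ≤ α)
    (W : Set (StrongDual ℝ Z)) (hW : W = (⋃ γ : Ordinal, ⋃ _ : γ ≤ β, XsetOf e zs (derIter (Set.univ : Set (V α)) γ)))
    (I : Set (StrongDual ℝ Z))
    (hI : I = {x | x ∈ W ∧ ∃ u : V α, e u = topIdx z x ∧ ¬∃ w, w ⋖ u})
    (D : Set (StrongDual ℝ Z)) (hD : D = truncTop z zs '' (W \ I))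
    (a : ℕ → StrongDual ℝ Z → ℝ)
    (hasupp : ∀ i : ℕ, (Function.support (a i)).Finite)
    (haW : ∀ i : ℕ, Function.support (a i) ⊆ W)
    (hann : ∀ (i : ℕ) (x : StrongDual ℝ Z), 0 ≤ a i x)
    (hasum : ∀ i : ℕ, ∑ᶠ x, a i x = 1)
    (p : StrongDual ℝ Z → ℝ)
    (hp : ∀ x ∈ W, Filter.Tendsto (fun i => a i x) Filter.atTop (nhds (p x)))
    (s : StrongDual ℝ Z → ℝ)
    (hs : ∀ y ∈ D, Filter.Tendsto
      (fun i => ∑ᶠ x ∈ {x | x ∈ W \ I ∧ truncTop z zs x = y}, a i x)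
      Filter.atTop (nhds (s y)))
    (hbdd : ∃ M : ℝ, ∀ i : ℕ, ‖∑ᶠ x, a i x • x‖ ≤ M) :
    Summable (fun x : ↥W => p x.1 • x.1) ∧
    Summable (fun x : ↥I => p x.1 • x.1) ∧
    Summable (fun y : ↥D => s y.1 • y.1) ∧
    Summable (fun y : ↥D =>
      (s y.1 - ∑' x : ↥{x | x ∈ W \ I ∧ truncTop z zs x = y.1}, p x.1) • y.1) ∧
    ∀ y ∈ D, (∑' x : ↥{x | x ∈ W \ I ∧ truncTop z zs x = y}, p x.1) ≤ s y := by
  obtain ⟨M, hM⟩ := hbdd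
  have hzs : ∀ n, ‖zs n‖ ≤ 2 * K := norm_coord_le hz1 hbasic hspan hbi
  have hgoodW : ∀ x ∈ W, IsNonnegCoordComb z zs x := by
    simp only [hW, Set.mem_iUnion]
    rintro x ⟨γ, -, hx⟩
    exact isNonnegCoordComb_of_mem_XsetOf hbi heinj (hchainfin α hαc) hx
  have hIW : I ⊆ W := hI ▸ fun x hx => hx.1
  have hgoodD : ∀ y ∈ D, IsNonnegCoordComb z zs y := by
    rw [hD]
    rintro _ ⟨x, hx, rfl⟩
    exact (hgoodW x hx.1).sub_smul_coord hbi _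
  have hag : ∀ i x, 0 ≤ a i x * coordSum z x := fun i x => by
    by_cases hx : a i x = 0
    · simp [hx]
    · exact mul_nonneg (hann i x) (hgoodW x (haW i hx)).coordSum_nonneg
  have hbound : ∀ i, ∑ᶠ x, a i x * coordSum z x ≤ M * C := fun i =>
    finsum_mul_coordSum_le (hasupp i) (fun x hx => hgoodW x (haW i hx)) (hM i) hzC
  have hW_le : ∀ F : Finset _, ↑F ⊆ W → ∑ x ∈ F, p x * coordSum z x ≤ M * C := fun F hF =>
    le_of_tendsto' (tendsto_finsetSum F fun x hx => (hp x (hF hx)).mul_const _) fun i =>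
      (sum_le_finsum_of_nonneg (hag i) ((hasupp i).subset (Function.support_mul_subset_left _ _))
        F).trans (hbound i)
  have hD_le : ∀ F : Finset _, ↑F ⊆ D → ∑ y ∈ F, s y * coordSum z y ≤ M * C := fun F hF =>
    le_of_tendsto' (tendsto_finsetSum F fun y hy => (hs y (hF hy)).mul_const _) fun i =>
      (sum_finsum_fiber_mul_le _ _ (hann i) (hag i) (hasupp i)
        (fun x hx => (hgoodW x hx.1).coordSum_sub_smul_coord_le hbi _) F).trans (hbound i)
  have hfiber : ∀ y ∈ D, (∑' x : ↥{x | x ∈ W \ I ∧ truncTop z zs x = y}, p x.1) ≤ s y :=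
    fun y hy => tsum_le_of_tendsto_finsum_mem hann hasupp (fun x hx => hp x hx.1.1) (hs y hy)
  have hp0 : ∀ x ∈ W, 0 ≤ p x := fun x hx => ge_of_tendsto' (hp x hx) fun i => hann i x
  have hs0 : ∀ y ∈ D, 0 ≤ s y := fun y hy =>
    ge_of_tendsto' (hs y hy) fun i => finsum_nonneg fun x => finsum_nonneg fun _ => hann i x
  refine ⟨summable_smul_of_sum_mul_coordSum_le hzs hp0 hgoodW hW_le,
    summable_smul_of_sum_mul_coordSum_le hzs (fun x hx => hp0 x (hIW hx))
      (fun x hx => hgoodW x (hIW hx)) fun F hF => hW_le F (hF.trans hIW),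
    summable_smul_of_sum_mul_coordSum_le hzs hs0 hgoodD hD_le, ?_, hfiber⟩
  refine summable_smul_of_sum_mul_coordSum_le hzs
    (c := fun y => s y - ∑' x : ↥{x | x ∈ W \ I ∧ truncTop z zs x = y}, p x.1)
    (fun y hy => sub_nonneg.mpr (hfiber y hy)) hgoodD
      fun F hF => (Finset.sum_le_sum fun y hy => ?_).trans (hD_le F hF)
  exact mul_le_mul_of_nonneg_right (sub_le_self _ (tsum_nonneg fun x => hp0 x x.2.1.1))
    (hgoodD y (hF hy)).coordSum_nonneg

end Paper
end
end
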